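/- arXiv:1804.02806 — 3 statements merged into one kernel-verified Lean document; each statement's English description precedes it below -/
import Mathlib

section
/- Let G be a finite Bayesian game with finitely many agents, finite action sets A_i, and finite type spaces Θ_i. A strategy map profile (σ_1,...,σ_n), where σ_i : Θ_i → Δ(A_i), is a Bayesian Nash equilibrium for every prior (i.e., for every family of conditional distributions p(·|θ_i) on Θ_{-i}) if and only if for every type profile (θ_1,...,θ_n), the mixed strategy profile (σ_1(θ_1),...,σ_n(θ_n)) is a mixed Nash equilibrium of the local game G_{(θ_1,...,θ_n)} whose payoffs are u_i(·,·,θ_1,...,θ_n). -/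
open Finset

/-- A mixed action on a finite action set: nonnegative weights summing to 1. -/
def IsMixed {α : Type*} [Fintype α] (σ : α → ℝ) : Prop :=
  (∀ a, 0 ≤ σ a) ∧ ∑ a, σ a = 1

/-- Multilinear (expected) extension of a payoff function to a mixed strategy profile. -/
def Epay {n : ℕ} {A : Fin n → Type*} [∀ i, Fintype (A i)]
    (u : (∀ i, A i) → ℝ) (σ : ∀ i, A i → ℝ) : ℝ :=
  ∑ a : ∀ i, A i, (∏ i, σ i (a i)) * u a

/-- `σ` is a mixed Nash equilibrium of the local game at type profile `θ`. -/
def IsLocalNE {n : ℕ} {A : Fin n → Type*} {Θ : Fin n → Type*} [∀ i, Fintype (A i)]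
    (u : Fin n → (∀ i, A i) → (∀ i, Θ i) → ℝ)
    (θ : ∀ i, Θ i) (σ : ∀ i, A i → ℝ) : Prop :=
  ∀ i, ∀ τ : A i → ℝ, IsMixed τ →
    Epay (fun a => u i a θ) (Function.update σ i τ) ≤ Epay (fun a => u i a θ) σ

/-- A family of conditional priors `p i t` : a distribution over opponents' type profiles
(encoded as distributions on full type profiles, agent `i`'s own component being
overwritten by its true type `t` when payoffs are evaluated). -/
def IsPrior {n : ℕ} {Θ : Fin n → Type*} [∀ i, Fintype (Θ i)]
    (p : ∀ i, Θ i → (∀ j, Θ j) → ℝ) : Prop :=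
  ∀ i t, (∀ θ, 0 ≤ p i t θ) ∧ ∑ θ : ∀ j, Θ j, p i t θ = 1

/-- Bayesian Nash equilibrium of the strategy map profile `σ` with respect to the prior `p`. -/
def IsBNE {n : ℕ} {A : Fin n → Type*} {Θ : Fin n → Type*}
    [∀ i, Fintype (A i)] [∀ i, Fintype (Θ i)]
    (u : Fin n → (∀ i, A i) → (∀ i, Θ i) → ℝ)
    (p : ∀ i, Θ i → (∀ j, Θ j) → ℝ)
    (σ : ∀ i, Θ i → A i → ℝ) : Prop :=
  ∀ i, ∀ t : Θ i, ∀ τ : A i → ℝ, IsMixed τ →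
    ∑ θ : ∀ j, Θ j, p i t θ *
      Epay (fun a => u i a (Function.update θ i t))
        (Function.update (fun j => σ j (θ j)) i τ) ≤
    ∑ θ : ∀ j, Θ j, p i t θ *
      Epay (fun a => u i a (Function.update θ i t))
        (Function.update (fun j => σ j (θ j)) i (σ i t))

/-- Theorem 2.2: a strategy map profile is a BNE for every prior iff for every type profile
it induces a Nash equilibrium of the corresponding local game. -/
theorem bne_all_priors_iff_local_ne {n : ℕ} {A : Fin n → Type*} {Θ : Fin n → Type*}
    [∀ i, Fintype (A i)] [∀ i, Fintype (Θ i)]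
    (u : Fin n → (∀ i, A i) → (∀ i, Θ i) → ℝ)
    (σ : ∀ i, Θ i → A i → ℝ)
    (hσ : ∀ i t, IsMixed (σ i t)) :
    (∀ p, IsPrior p → IsBNE u p σ) ↔
      (∀ θ : ∀ i, Θ i, IsLocalNE u θ (fun i => σ i (θ i))) := by
  classical
  constructor
  · intro h θ i τ hτ
    set p : ∀ i, Θ i → (∀ j, Θ j) → ℝ := fun _ _ θ' => if θ' = θ then 1 else 0 with hp
    have hprior : IsPrior p := by
      intro i t
      refine ⟨fun θ' => ?_, ?_⟩
      · dsimp [p]; split <;> norm_num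
      · simp [p]
    have h2 := h p hprior i (θ i) τ hτ
    simpa [p, Function.update_eq_self] using h2
  · intro h p hp i t τ hτ
    apply Finset.sum_le_sum
    intro θ' _
    apply mul_le_mul_of_nonneg_left _ ((hp i t).1 θ')
    have h2 := h (Function.update θ' i t) i τ hτ
    have e1 : (fun j => σ j (Function.update θ' i t j)) =
        Function.update (fun j => σ j (θ' j)) i (σ i t) := by
      funext j
      rcases eq_or_ne j i with rfl | hj
      · simp
      · simp [Function.update_of_ne hj]
    rw [e1, Function.update_idem] at h2
    exact h2
end

section
/- (Forward direction of Theorem 2.2) If a strategy map profile (σ_1,...,σ_n) of a finite Bayesian game is a Bayesian Nash equilibrium with respect to every prior, then for every fixed type profile (θ_1,...,θ_n), the profile (σ_1(θ_1),...,σ_n(θ_n)) is a mixed Nash equilibrium of the local game at (θ_1,...,θ_n). (Proved by choosing, for each agent i and each θ_{-i}, the degenerate conditional prior p(θ'_{-i}|θ_i) = 1 if θ'_{-i} = θ_{-i} and 0 otherwise.) -/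
open Finset

/-- Forward direction of Theorem 2.2: if a strategy map profile is a BNE with respect to
every prior, then at every type profile it induces a Nash equilibrium of the local game. -/
theorem bne_all_priors_imp_local_ne {n : ℕ} {A : Fin n → Type*} {Θ : Fin n → Type*}
    [∀ i, Fintype (A i)] [∀ i, Fintype (Θ i)]
    (u : Fin n → (∀ i, A i) → (∀ i, Θ i) → ℝ)
    (σ : ∀ i, Θ i → A i → ℝ)
    (hσ : ∀ i t, IsMixed (σ i t))
    (hbne : ∀ p, IsPrior p → IsBNE u p σ) :
    ∀ θ : ∀ i, Θ i, IsLocalNE u θ (fun i => σ i (θ i)) := by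
  classical
  intro θ i τ hτ
  set p : ∀ i, Θ i → (∀ j, Θ j) → ℝ := fun _ _ θ' => if θ' = θ then 1 else 0 with hp
  have hprior : IsPrior p := by
    intro i t
    constructor
    · intro θ'; simp only [hp]; split <;> norm_num
    · simp [hp]
  have h := hbne p hprior i (θ i) τ hτ
  have hcollapse : ∀ (f : (∀ j, Θ j) → ℝ),
      ∑ θ' : ∀ j, Θ j, p i (θ i) θ' * f θ' = f θ := by
    intro f
    rw [Finset.sum_eq_single θ]
    · simp [hp]
    · intro b _ hb; simp [hp, hb]
    · simp
  rw [hcollapse, hcollapse] at h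
  have hupd : Function.update θ i (θ i) = θ := Function.update_eq_self _ _
  have hupd2 : Function.update (fun j => σ j (θ j)) i (σ i (θ i))
      = fun j => σ j (θ j) := Function.update_eq_self _ _
  rw [hupd, hupd2] at h
  exact h
end

section
/- If an own-type-linear Bayesian game (multi-game with types in Σ^{m-1}) is type-regular on the boundary ⋃_{i∈I} Θ_i × V^{n-1} with witnesses σ*_i : Σ^{m-1} → Δ(A_i) (where the other agents' witnesses are defined on vertices), then it is type-regular on all of Θ = (Σ^{m-1})^n: for every type profile (θ_1,...,θ_n), the profile (σ*_1(θ_1),...,σ*_n(θ_n)) (with each σ*_i the affine extension of its vertex values) is a Nash equilibrium of the local game at (θ_1,...,θ_n). -/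
open Finset

/-- The (m-1)-dimensional simplex in ℝ^m. -/
def InSimplex {m : ℕ} (x : Fin m → ℝ) : Prop :=
  (∀ j, 0 ≤ x j) ∧ ∑ j, x j = 1

/-- The j-th vertex (standard basis vector) of the simplex Σ^{m-1}. -/
def vert {m : ℕ} (j : Fin m) : Fin m → ℝ := fun r => if r = j then 1 else 0

/-- In a multi-game with basic-game payoffs `u i j`, agent `i`'s payoff at type `t ∈ Σ^{m-1}`
for the pure action profile `a` is `∑ j, u i j a * t j`.  `MGLocalNE u θ σ` says that the
mixed strategy profile `σ` is a Nash equilibrium of the local game at the type profile `θ`. -/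
def MGLocalNE {n m : ℕ} {A : Fin n → Type*} [∀ i, Fintype (A i)]
    (u : Fin n → Fin m → (∀ ℓ, A ℓ) → ℝ)
    (θ : Fin n → Fin m → ℝ) (σ : ∀ ℓ, A ℓ → ℝ) : Prop :=
  ∀ i, ∀ τ : A i → ℝ, IsMixed τ →
    Epay (fun a => ∑ j, u i j a * θ i j) (Function.update σ i τ) ≤
    Epay (fun a => ∑ j, u i j a * θ i j) σ

lemma epay_expand {n m : ℕ} {A : Fin n → Type*} [∀ i, Fintype (A i)]
    (σstar : ∀ i, (Fin m → ℝ) → A i → ℝ)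
    (θ : Fin n → Fin m → ℝ) (hθ : ∀ ℓ, InSimplex (θ ℓ))
    (haff : ∀ ℓ, σstar ℓ (θ ℓ) = fun a => ∑ j, θ ℓ j * σstar ℓ (vert j) a)
    (i : Fin n) (τ : A i → ℝ) (f : (∀ ℓ, A ℓ) → ℝ) :
    Epay f (Function.update (fun ℓ => σstar ℓ (θ ℓ)) i τ)
      = ∑ J : Fin n → Fin m, (∏ ℓ, θ ℓ (J ℓ)) *
          Epay f (Function.update (fun ℓ => σstar ℓ (vert (J ℓ))) i τ) := by
  unfold Epay
  simp_rw [Finset.mul_sum]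
  rw [Finset.sum_comm]
  refine Finset.sum_congr rfl fun a _ => ?_
  have key : ∀ J : Fin n → Fin m,
      (∏ ℓ, θ ℓ (J ℓ)) * ((∏ ℓ, Function.update (fun ℓ' => σstar ℓ' (vert (J ℓ'))) i τ ℓ (a ℓ)) * f a)
      = (∏ ℓ, θ ℓ (J ℓ) * Function.update (fun ℓ' => σstar ℓ' (vert (J ℓ))) i τ ℓ (a ℓ)) * f a := by
    intro J
    rw [← mul_assoc, ← Finset.prod_mul_distrib]
    congr 1
  simp_rw [key]
  rw [← Finset.sum_mul]
  congr 1
  calc ∏ ℓ, Function.update (fun ℓ' => σstar ℓ' (θ ℓ')) i τ ℓ (a ℓ)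
      = ∏ ℓ, ∑ j, θ ℓ j * Function.update (fun ℓ' => σstar ℓ' (vert j)) i τ ℓ (a ℓ) := by
        refine Finset.prod_congr rfl fun ℓ _ => ?_
        by_cases h : ℓ = i
        · subst h
          simp [← Finset.sum_mul, (hθ ℓ).2]
        · simp only [Function.update_of_ne h]
          rw [haff ℓ]
    _ = ∑ J ∈ Fintype.piFinset (fun _ : Fin n => (Finset.univ : Finset (Fin m))),
          ∏ ℓ, θ ℓ (J ℓ) * Function.update (fun ℓ' => σstar ℓ' (vert (J ℓ))) i τ ℓ (a ℓ) :=
        Finset.prod_univ_sum _ _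
    _ = ∑ J : Fin n → Fin m,
          ∏ ℓ, θ ℓ (J ℓ) * Function.update (fun ℓ' => σstar ℓ' (vert (J ℓ))) i τ ℓ (a ℓ) := by
        rw [Fintype.piFinset_univ]

/-- Theorem 4.4: suppose a multi-game is type-regular on the boundary
`⋃ᵢ Θᵢ × V^{n-1}` of the type space, with witnesses `σ*ᵢ : Σ^{m-1} → Δ(Aᵢ)` that are the
affine extensions of their vertex values (the other agents' witnesses being their vertex
values).  Then the game is type-regular on all of `(Σ^{m-1})^n`: for every type profile
`θ` with each `θᵢ ∈ Σ^{m-1}`, the profile `(σ*₁(θ₁), ..., σ*ₙ(θₙ))` is a NE of the local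
game at `θ`. -/
theorem type_regular_boundary_imp_type_regular {n m : ℕ} {A : Fin n → Type*}
    [∀ i, Fintype (A i)]
    (u : Fin n → Fin m → (∀ ℓ, A ℓ) → ℝ)
    (σstar : ∀ i, (Fin m → ℝ) → A i → ℝ)
    (hmix : ∀ i t, InSimplex t → IsMixed (σstar i t))
    (haff : ∀ i (t : Fin m → ℝ), InSimplex t →
      σstar i t = fun a => ∑ j, t j * σstar i (vert j) a)
    (hbd : ∀ i : Fin n, ∀ t : Fin m → ℝ, InSimplex t → ∀ J : Fin n → Fin m,
      MGLocalNE u (Function.update (fun ℓ => vert (J ℓ)) i t)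
        (Function.update (fun ℓ => σstar ℓ (vert (J ℓ))) i (σstar i t))) :
    ∀ θ : Fin n → Fin m → ℝ, (∀ ℓ, InSimplex (θ ℓ)) →
      MGLocalNE u θ (fun ℓ => σstar ℓ (θ ℓ)) := by
  intro θ hθ i τ hτ
  have haff' : ∀ ℓ, σstar ℓ (θ ℓ) = fun a => ∑ j, θ ℓ j * σstar ℓ (vert j) a :=
    fun ℓ => haff ℓ (θ ℓ) (hθ ℓ)
  set f : (∀ ℓ, A ℓ) → ℝ := fun a => ∑ j, u i j a * θ i j with hf
  have hself : Function.update (fun ℓ => σstar ℓ (θ ℓ)) i (σstar i (θ i))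
      = fun ℓ => σstar ℓ (θ ℓ) := Function.update_eq_self _ _
  conv_rhs => rw [← hself]
  rw [epay_expand σstar θ hθ haff' i τ f, epay_expand σstar θ hθ haff' i (σstar i (θ i)) f]
  refine Finset.sum_le_sum fun J _ => ?_
  refine mul_le_mul_of_nonneg_left ?_ (Finset.prod_nonneg fun ℓ _ => (hθ ℓ).1 (J ℓ))
  have h := hbd i (θ i) (hθ i) J i τ hτ
  have hpay : (fun a => ∑ j, u i j a * Function.update (fun ℓ => vert (J ℓ)) i (θ i) i j) = f := by
    simp [hf]
  rw [hpay, Function.update_idem] at h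
  exact h
end
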